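/- Let x₁,…,x_N ∈ ℝ² with x_i ≺ x_j for all i < j, let f be the continuous (or discrete) 1-center cost, and C_{i,k} the optimal k-center value on {x₁,…,x_i}, with C_{0,k} = 0. Then for all i ∈ [1,N] and k ≥ 2, the Bellman recursion holds: C_{i,k} = min_{j ∈ [1,i]} max(C_{j−1,k−1}, f({x_j,…,x_i})). -/
import Mathlib


noncomputable section

abbrev Pt : Type := EuclideanSpace ℝ (Fin 2)

/-- Strict Pareto dominance on ℝ²: `y ≺ z` iff `y¹ < z¹` and `y² > z²`. -/
def prec (y z : Pt) : Prop := y 0 < z 0 ∧ z 1 < y 1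

/-- Continuous 1-center cost of a cluster of indices (0 for the empty cluster). -/
def cCost (x : ℕ → Pt) (P : Finset ℕ) : ℝ :=
  if h : P.Nonempty then ⨅ y : Pt, P.sup' h (fun j => dist (x j) y) else 0

/-- Discrete 1-center cost of a cluster of indices (0 for the empty cluster). -/
def dCost (x : ℕ → Pt) (P : Finset ℕ) : ℝ :=
  if h : P.Nonempty then
    P.inf' h (fun c => P.sup' h (fun j => dist (x j) (x c))) else 0

/-- `π` is a partition of `S` into `k` nonempty parts. -/
def IsPartitionOf (π : Finset (Finset ℕ)) (S : Finset ℕ) (k : ℕ) : Prop :=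
  (∀ p ∈ π, p.Nonempty) ∧ (π : Set (Finset ℕ)).PairwiseDisjoint id ∧
    π.sup id = S ∧ π.card = k

/-- k-center objective of a partition: maximum cluster cost. -/
def kObj (cost : Finset ℕ → ℝ) (π : Finset (Finset ℕ)) : ℝ :=
  if h : π.Nonempty then π.sup' h cost else 0

/-- Optimal k-center value on the index set `S`: infimum of the objective
over all partitions of `S` into `k` nonempty parts. -/
def CVal (cost : Finset ℕ → ℝ) (S : Finset ℕ) (k : ℕ) : ℝ :=
  sInf (kObj cost '' {π | IsPartitionOf π S k})

open Finset
lemma dist_pt (p q : Pt) : dist p q = Real.sqrt ((p 0 - q 0)^2 + (p 1 - q 1)^2) := by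
  rw [EuclideanSpace.dist_eq, Fin.sum_univ_two]
  simp [Real.dist_eq, sq_abs]

lemma sqrt2_mono {u v u' v' : ℝ} (h0 : |u'| ≤ |u|) (h1 : |v'| ≤ |v|) :
    Real.sqrt (u'^2 + v'^2) ≤ Real.sqrt (u^2 + v^2) := by
  apply Real.sqrt_le_sqrt
  have := pow_le_pow_left₀ (abs_nonneg u') h0 2
  have := pow_le_pow_left₀ (abs_nonneg v') h1 2
  simp only [sq_abs] at *
  linarith

section geo
variable {N : ℕ} {x : ℕ → Pt} (mono : ∀ i j : ℕ, i < j → j ≤ N → prec (x i) (x j))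
include mono

lemma mono0 {a b : ℕ} (hab : a ≤ b) (hb : b ≤ N) : x a 0 ≤ x b 0 := by
  rcases eq_or_lt_of_le hab with rfl | h
  · exact le_refl _
  · exact (mono a b h hb).1.le

lemma mono1 {a b : ℕ} (hab : a ≤ b) (hb : b ≤ N) : x b 1 ≤ x a 1 := by
  rcases eq_or_lt_of_le hab with rfl | h
  · exact le_refl _
  · exact (mono a b h hb).2.le

lemma distD {a a' b' b : ℕ} (h1 : a ≤ a') (h2 : a' ≤ b') (h3 : b' ≤ b) (hb : b ≤ N) :
    dist (x a') (x b') ≤ dist (x a) (x b) := by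
  have hb' : b' ≤ N := le_trans h3 hb
  have ha' : a' ≤ N := le_trans h2 hb'
  rw [dist_pt, dist_pt]
  apply sqrt2_mono
  · rw [abs_sub_comm, abs_sub_comm (x a 0)]
    rw [abs_of_nonneg (by linarith [mono0 mono h2 hb']), abs_of_nonneg
      (by linarith [mono0 mono (le_trans h1 (le_trans h2 h3)) hb])]
    have := mono0 mono h1 ha'
    have := mono0 mono h3 hb
    linarith
  · rw [abs_of_nonneg (by linarith [mono1 mono h2 hb']), abs_of_nonneg
      (by linarith [mono1 mono (le_trans h1 (le_trans h2 h3)) hb])]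
    have := mono1 mono h1 ha'
    have := mono1 mono h3 hb
    linarith

omit mono in
lemma div2_le_max (p q y : Pt) : dist p q / 2 ≤ max (dist p y) (dist q y) := by
  have h := dist_triangle p y q
  have h1 : dist p y ≤ max (dist p y) (dist q y) := le_max_left _ _
  have h2 : dist y q ≤ max (dist p y) (dist q y) := by
    rw [dist_comm]; exact le_max_right _ _
  linarith

lemma mid_close {a m b : ℕ} (h1 : a ≤ m) (h2 : m ≤ b) (hb : b ≤ N) :
    dist (x m) (((2:ℝ)⁻¹) • (x a + x b)) ≤ dist (x a) (x b) / 2 := by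
  set y : Pt := ((2:ℝ)⁻¹) • (x a + x b) with hy
  have hy0 : y 0 = (x a 0 + x b 0)/2 := by
    simp [hy, PiLp.smul_apply, PiLp.add_apply]; ring
  have hy1 : y 1 = (x a 1 + x b 1)/2 := by
    simp [hy, PiLp.smul_apply, PiLp.add_apply]; ring
  rw [dist_pt, dist_pt, hy0, hy1]
  have hm : m ≤ N := le_trans h2 hb
  have e : Real.sqrt (((x a 0 - x b 0)/2)^2 + ((x a 1 - x b 1)/2)^2)
      = Real.sqrt ((x a 0 - x b 0)^2 + (x a 1 - x b 1)^2) / 2 := by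
    rw [show ((x a 0 - x b 0)/2)^2 + ((x a 1 - x b 1)/2)^2
        = ((x a 0 - x b 0)^2 + (x a 1 - x b 1)^2) * (1/2)^2 by ring,
      Real.sqrt_mul (by positivity), Real.sqrt_sq (by norm_num)]
    ring
  rw [← e]
  apply sqrt2_mono
  · have l1 := mono0 mono h1 hm
    have l2 := mono0 mono h2 hb
    have hc : |(x a 0 - x b 0)/2| = (x b 0 - x a 0)/2 := by
      rw [abs_of_nonpos (by linarith)]; ring
    rw [hc]
    exact abs_le.mpr ⟨by linarith, by linarith⟩
  · have l1 := mono1 mono h1 hm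
    have l2 := mono1 mono h2 hb
    have hc : |(x a 1 - x b 1)/2| = (x a 1 - x b 1)/2 := by
      rw [abs_of_nonneg (by linarith)]
    rw [hc]
    exact abs_le.mpr ⟨by linarith, by linarith⟩


-- basic cost facts
omit mono in
lemma cCost_nonneg (P : Finset ℕ) : 0 ≤ cCost x P := by
  unfold cCost
  split_ifs with h
  · exact Real.iInf_nonneg fun y =>
      le_trans dist_nonneg (Finset.le_sup' (fun j => dist (x j) y) h.choose_spec)
  · exact le_refl _

omit mono in
lemma dCost_nonneg (P : Finset ℕ) : 0 ≤ dCost x P := by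
  unfold dCost
  split_ifs with h
  · exact Finset.le_inf' h _ fun c hc =>
      le_trans dist_nonneg (Finset.le_sup' (fun j => dist (x j) (x c)) hc)
  · exact le_refl _

omit mono in
lemma cCost_bdd (P : Finset ℕ) (h : P.Nonempty) :
    BddBelow (Set.range fun y : Pt => P.sup' h (fun j => dist (x j) y)) := by
  refine ⟨0, ?_⟩
  rintro r ⟨y, rfl⟩
  exact le_trans dist_nonneg (Finset.le_sup' (fun j => dist (x j) y) h.choose_spec)

omit mono in
lemma cCost_singleton (t : ℕ) : cCost x {t} = 0 := by
  refine le_antisymm ?_ (cCost_nonneg _)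
  unfold cCost
  rw [dif_pos (Finset.singleton_nonempty t)]
  have := ciInf_le (cCost_bdd (x := x) {t} (Finset.singleton_nonempty t)) (x t)
  simpa using this

omit mono in
lemma dCost_singleton (t : ℕ) : dCost x {t} = 0 := by
  unfold dCost
  rw [dif_pos (Finset.singleton_nonempty t)]
  simp

-- lower bound for cCost via endpoints
omit mono in
lemma cCost_ge (P : Finset ℕ) (h : P.Nonempty) :
    dist (x (P.min' h)) (x (P.max' h)) / 2 ≤ cCost x P := by
  unfold cCost
  rw [dif_pos h]
  refine le_ciInf fun y => ?_
  refine le_trans (div2_le_max (x (P.min' h)) (x (P.max' h)) y) ?_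
  exact max_le (Finset.le_sup' (fun j => dist (x j) y) (P.min'_mem h)) (Finset.le_sup' (fun j => dist (x j) y) (P.max'_mem h))

-- upper bound for cCost of an interval
lemma cCost_Icc_le_half {a b : ℕ} (hab : a ≤ b) (hb : b ≤ N) :
    cCost x (Finset.Icc a b) ≤ dist (x a) (x b) / 2 := by
  have hne : (Finset.Icc a b).Nonempty := Finset.nonempty_Icc.mpr hab
  unfold cCost
  rw [dif_pos hne]
  refine le_trans (ciInf_le (cCost_bdd _ hne) (((2:ℝ)⁻¹) • (x a + x b))) ?_
  refine Finset.sup'_le hne _ fun m hm => ?_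
  rw [Finset.mem_Icc] at hm
  exact mid_close mono hm.1 hm.2 hb

-- dCost of interval at most endpoint distance
lemma dCost_Icc_le_d {a b : ℕ} (hab : a ≤ b) (hb : b ≤ N) :
    dCost x (Finset.Icc a b) ≤ dist (x a) (x b) := by
  have hne : (Finset.Icc a b).Nonempty := Finset.nonempty_Icc.mpr hab
  unfold dCost
  rw [dif_pos hne]
  refine le_trans (Finset.inf'_le _ (Finset.mem_Icc.mpr ⟨le_refl a, hab⟩)) ?_
  refine Finset.sup'_le hne _ fun m hm => ?_
  rw [Finset.mem_Icc] at hm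
  rw [dist_comm]
  exact distD mono (le_refl a) hm.1 hm.2 hb

-- L1: interval dominated by straddling cluster, cCost version
lemma cCost_Icc_le (P : Finset ℕ) (hP : P.Nonempty) (hN : ∀ t ∈ P, t ≤ N)
    {a b : ℕ} (hab : a ≤ b) (hmin : P.min' hP ≤ a) (hmax : b ≤ P.max' hP) :
    cCost x (Finset.Icc a b) ≤ cCost x P := by
  have hmaxN : P.max' hP ≤ N := hN _ (P.max'_mem hP)
  refine le_trans (cCost_Icc_le_half mono hab (le_trans hmax hmaxN)) ?_
  refine le_trans ?_ (cCost_ge P hP)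
  have h1 := distD mono hmin hab hmax hmaxN
  linarith

-- L1: dCost version
lemma dCost_Icc_le (P : Finset ℕ) (hP : P.Nonempty) (hN : ∀ t ∈ P, t ≤ N)
    {a b : ℕ} (hab : a ≤ b) (hmin : P.min' hP ≤ a) (hmax : b ≤ P.max' hP) :
    dCost x (Finset.Icc a b) ≤ dCost x P := by
  have hne : (Finset.Icc a b).Nonempty := Finset.nonempty_Icc.mpr hab
  have hmaxN : P.max' hP ≤ N := hN _ (P.max'_mem hP)
  have hbN : b ≤ N := le_trans hmax hmaxN
  conv_rhs => rw [dCost, dif_pos hP]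
  refine Finset.le_inf' hP _ fun c hc => ?_
  have hcN : c ≤ N := hN c hc
  rcases lt_or_ge c a with hca | hac
  · -- center left of the interval
    refine le_trans (dCost_Icc_le_d mono hab hbN) ?_
    refine le_trans ?_ (Finset.le_sup' (fun j => dist (x j) (x c)) (P.max'_mem hP))
    rw [dist_comm (x (P.max' hP))]
    exact distD mono hca.le hab hmax hmaxN
  rcases le_or_gt c b with hcb | hbc
  · -- center inside the interval
    rw [dCost, dif_pos hne]
    refine le_trans (Finset.inf'_le _ (Finset.mem_Icc.mpr ⟨hac, hcb⟩)) ?_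
    refine Finset.sup'_le hne _ fun m hm => ?_
    rw [Finset.mem_Icc] at hm
    rcases le_or_gt m c with hmc | hcm
    · refine le_trans ?_ (Finset.le_sup' (fun j => dist (x j) (x c)) (P.min'_mem hP))
      exact distD mono (le_trans hmin hm.1) hmc (le_refl c) hcN
    · refine le_trans ?_ (Finset.le_sup' (fun j => dist (x j) (x c)) (P.max'_mem hP))
      rw [dist_comm (x m), dist_comm (x (P.max' hP))]
      exact distD mono (le_refl c) hcm.le (le_trans hm.2 hmax) hmaxN
  · -- center right of the interval
    refine le_trans (dCost_Icc_le_d mono hab hbN) ?_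
    refine le_trans ?_ (Finset.le_sup' (fun j => dist (x j) (x c)) (P.min'_mem hP))
    exact distD mono hmin hab hbc.le hcN

-- L2 cCost: subset monotonicity
omit mono in
lemma cCost_mono {Q P : Finset ℕ} (hQP : Q ⊆ P) (hQ : Q.Nonempty) :
    cCost x Q ≤ cCost x P := by
  have hP : P.Nonempty := hQ.mono hQP
  rw [cCost, cCost, dif_pos hQ, dif_pos hP]
  refine ciInf_mono (cCost_bdd Q hQ) fun y => ?_
  exact Finset.sup'_le hQ _ fun t ht => Finset.le_sup' (fun j => dist (x j) y) (hQP ht)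

-- L2 dCost: prefix monotonicity
lemma dCost_filter_le (P : Finset ℕ) (hN : ∀ t ∈ P, t ≤ N) (j : ℕ)
    (hQ : (P.filter (· < j)).Nonempty) :
    dCost x (P.filter (· < j)) ≤ dCost x P := by
  set Q := P.filter (· < j) with hQdef
  have hQP : Q ⊆ P := Finset.filter_subset _ _
  have hP : P.Nonempty := hQ.mono hQP
  conv_rhs => rw [dCost, dif_pos hP]
  refine Finset.le_inf' hP _ fun c hc => ?_
  have hcN : c ≤ N := hN c hc
  rcases lt_or_ge c j with hcj | hjc
  · -- c is itself in Q
    have hcQ : c ∈ Q := Finset.mem_filter.mpr ⟨hc, hcj⟩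
    rw [dCost, dif_pos hQ]
    refine le_trans (Finset.inf'_le _ hcQ) ?_
    exact Finset.sup'_le hQ _ fun t ht =>
      Finset.le_sup' (fun j => dist (x j) (x c)) (hQP ht)
  · -- c is beyond all of Q; use center max' Q
    have hmaxQ : Q.max' hQ < j := (Finset.mem_filter.mp (Q.max'_mem hQ)).2
    rw [dCost, dif_pos hQ]
    refine le_trans (Finset.inf'_le _ (Q.max'_mem hQ)) ?_
    refine Finset.sup'_le hQ _ fun t ht => ?_
    refine le_trans ?_ (Finset.le_sup' (fun j => dist (x j) (x c)) (hQP ht))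
    -- dist (x t) (x (max' Q)) ≤ dist (x t) (x c)
    rcases le_or_gt t (Q.max' hQ) with h1 | h1
    · exact distD mono (le_refl t) h1 (le_trans (le_of_lt hmaxQ) hjc) hcN
    · exact absurd (Q.le_max' t ht) (not_le.mpr h1)


end geo

section part

lemma card_le_of_partition {π : Finset (Finset ℕ)} {S : Finset ℕ} {k : ℕ}
    (h : IsPartitionOf π S k) : k ≤ S.card := by
  obtain ⟨hne, hdisj, hsup, hcard⟩ := h
  have : S = π.biUnion id := by rw [← hsup, Finset.sup_eq_biUnion]
  rw [this, Finset.card_biUnion (fun p hp q hq hpq => hdisj hp hq hpq)]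
  calc k = ∑ _p ∈ π, 1 := by rw [Finset.sum_const, smul_eq_mul, mul_one, hcard]
    _ ≤ ∑ p ∈ π, p.card := Finset.sum_le_sum fun p hp => (hne p hp).card_pos

lemma partitions_finite (S : Finset ℕ) (k : ℕ) :
    {π | IsPartitionOf π S k}.Finite := by
  refine Set.Finite.subset (Finset.finite_toSet S.powerset.powerset) fun π hπ => ?_
  obtain ⟨hne, hdisj, hsup, hcard⟩ := hπ
  simp only [Finset.coe_powerset, Set.mem_preimage, Set.mem_powerset_iff,
    Finset.coe_subset, Finset.mem_coe, Finset.mem_powerset]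
  intro p hp
  rw [← hsup]
  exact Finset.le_sup (f := id) hp

lemma CVal_le {cost : Finset ℕ → ℝ} {π : Finset (Finset ℕ)} {S : Finset ℕ} {k : ℕ}
    (h : IsPartitionOf π S k) : CVal cost S k ≤ kObj cost π := by
  refine csInf_le (((partitions_finite S k).image _).bddBelow) ⟨π, h, rfl⟩

lemma CVal_attained {cost : Finset ℕ → ℝ} {S : Finset ℕ} {k : ℕ}
    (h : ∃ π, IsPartitionOf π S k) :
    ∃ π, IsPartitionOf π S k ∧ kObj cost π = CVal cost S k := by
  obtain ⟨π₁, hπ₁⟩ := h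
  have hne : (kObj cost '' {π | IsPartitionOf π S k}).Nonempty := ⟨_, π₁, hπ₁, rfl⟩
  have := hne.csInf_mem ((partitions_finite S k).image _)
  obtain ⟨π, hπ, hval⟩ := this
  exact ⟨π, hπ, hval⟩

lemma CVal_zero {cost : Finset ℕ → ℝ} {S : Finset ℕ} {k : ℕ}
    (h : S.card < k) : CVal cost S k = 0 := by
  have : {π | IsPartitionOf π S k} = ∅ := by
    ext π
    simp only [Set.mem_setOf_eq, Set.mem_empty_iff_false, iff_false]
    exact fun hπ => absurd (card_le_of_partition hπ) (not_le.mpr h)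
  rw [CVal, this, Set.image_empty, Real.sInf_empty]

/-- The canonical partition of `Icc 1 n` into `m` parts: singletons and a tail. -/
def canonPart (m n : ℕ) : Finset (Finset ℕ) :=
  (Finset.Icc 1 (m-1)).image (fun t => ({t} : Finset ℕ)) ∪ {Finset.Icc m n}

lemma canonPart_isPartition {m n : ℕ} (hm : 1 ≤ m) (hmn : m ≤ n) :
    IsPartitionOf (canonPart m n) (Finset.Icc 1 n) m := by
  have htail : (Finset.Icc m n).Nonempty := Finset.nonempty_Icc.mpr hmn
  have hmem : ∀ p ∈ canonPart m n,
      (∃ t, 1 ≤ t ∧ t ≤ m - 1 ∧ p = {t}) ∨ p = Finset.Icc m n := by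
    intro p hp
    rw [canonPart, Finset.mem_union, Finset.mem_image] at hp
    rcases hp with ⟨t, ht, rfl⟩ | hp
    · rw [Finset.mem_Icc] at ht; exact Or.inl ⟨t, ht.1, ht.2, rfl⟩
    · exact Or.inr (Finset.mem_singleton.mp hp)
  refine ⟨?_, ?_, ?_, ?_⟩
  · intro p hp
    rcases hmem p hp with ⟨t, _, _, rfl⟩ | rfl
    · exact Finset.singleton_nonempty t
    · exact htail
  · intro p hp q hq hpq
    simp only [Finset.mem_coe] at hp hq
    have key : ∀ a, a ∈ p → a ∈ q → False := by
      intro a hap haq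
      have hbnd : ∀ r, r ∈ canonPart m n → a ∈ r → (a ≤ m - 1 ∨ m ≤ a) := by
        intro r hr har
        rcases hmem r hr with ⟨t, _, ht2, rfl⟩ | rfl
        · rw [Finset.mem_singleton] at har; exact Or.inl (har ▸ ht2)
        · exact Or.inr (Finset.mem_Icc.mp har).1
      -- identify p and q
      have hpq' : p = q := by
        rcases hmem p hp with ⟨t, _, ht2, rfl⟩ | rfl <;>
          rcases hmem q hq with ⟨s, _, hs2, rfl⟩ | rfl
        · rw [Finset.mem_singleton] at hap haq; rw [hap] at haq; rw [haq]
        · rw [Finset.mem_singleton] at hap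
          have := (Finset.mem_Icc.mp haq).1
          omega
        · rw [Finset.mem_singleton] at haq
          have := (Finset.mem_Icc.mp hap).1
          omega
        · rfl
      exact hpq hpq'
    exact Finset.disjoint_left.mpr (fun a ha ha' => key a ha ha')
  · apply Finset.Subset.antisymm
    · show (canonPart m n).sup id ≤ Finset.Icc 1 n
      refine Finset.sup_le fun p hp => ?_
      show id p ⊆ Finset.Icc 1 n
      rcases hmem p hp with ⟨t, ht1, ht2, rfl⟩ | rfl
      · simp only [id_eq, Finset.singleton_subset_iff, Finset.mem_Icc]
        omega
      · simp only [id_eq]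
        intro a ha
        rw [Finset.mem_Icc] at ha ⊢
        omega
    · intro a ha
      rw [Finset.mem_Icc] at ha
      rcases le_or_gt m a with h | h
      · have : Finset.Icc m n ∈ canonPart m n := by
          rw [canonPart, Finset.mem_union]; right; exact Finset.mem_singleton_self _
        exact Finset.mem_sup.mpr ⟨_, this, Finset.mem_Icc.mpr ⟨h, ha.2⟩⟩
      · have hmem' : ({a} : Finset ℕ) ∈ canonPart m n := by
          rw [canonPart, Finset.mem_union, Finset.mem_image]
          left; exact ⟨a, Finset.mem_Icc.mpr ⟨ha.1, by omega⟩, rfl⟩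
        exact Finset.mem_sup.mpr ⟨_, hmem', Finset.mem_singleton_self a⟩
  · rw [canonPart, Finset.card_union_of_disjoint, Finset.card_image_of_injOn,
      Finset.card_singleton, Nat.card_Icc]
    · omega
    · intro s hs t ht hst
      rw [← Finset.singleton_inj]; exact hst
    · rw [Finset.disjoint_singleton_right, Finset.mem_image]
      rintro ⟨t, ht, hteq⟩
      rw [Finset.mem_Icc] at ht
      have : t ∈ Finset.Icc m n := hteq ▸ Finset.mem_singleton_self t
      rw [Finset.mem_Icc] at this
      omega

lemma kObj_le {cost : Finset ℕ → ℝ} {π : Finset (Finset ℕ)} (hne : π.Nonempty)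
    {r : ℝ} (h : ∀ p ∈ π, cost p ≤ r) : kObj cost π ≤ r := by
  rw [kObj, dif_pos hne]; exact Finset.sup'_le hne _ h

lemma le_kObj {cost : Finset ℕ → ℝ} {π : Finset (Finset ℕ)} {p : Finset ℕ}
    (hp : p ∈ π) : cost p ≤ kObj cost π := by
  rw [kObj, dif_pos ⟨p, hp⟩]; exact Finset.le_sup' cost hp

/-- extending a partition of a prefix by a tail interval -/
lemma insert_tail_partition {π : Finset (Finset ℕ)} {j i k : ℕ}
    (hj : 1 ≤ j) (hji : j ≤ i) (hπ : IsPartitionOf π (Finset.Icc 1 (j-1)) (k-1))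
    (hk : 1 ≤ k) :
    IsPartitionOf (insert (Finset.Icc j i) π) (Finset.Icc 1 i) k ∧
      Finset.Icc j i ∉ π := by
  obtain ⟨hne, hdisj, hsup, hcard⟩ := hπ
  have hsub : ∀ p ∈ π, p ⊆ Finset.Icc 1 (j-1) := by
    intro p hp; rw [← hsup]; exact Finset.le_sup (f := id) hp
  have hnotin : Finset.Icc j i ∉ π := by
    intro h
    have := hsub _ h (Finset.mem_Icc.mpr ⟨le_refl j, hji⟩)
    rw [Finset.mem_Icc] at this; omega
  have hdisjtail : ∀ p ∈ π, Disjoint (Finset.Icc j i) p := by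
    intro p hp
    refine Finset.disjoint_left.mpr fun a ha hap => ?_
    have h1 := Finset.mem_Icc.mp ha
    have h2 := Finset.mem_Icc.mp (hsub p hp hap)
    omega
  refine ⟨⟨?_, ?_, ?_, ?_⟩, hnotin⟩
  · intro p hp
    rcases Finset.mem_insert.mp hp with rfl | hp
    · exact Finset.nonempty_Icc.mpr hji
    · exact hne p hp
  · rw [Finset.coe_insert]
    refine Set.PairwiseDisjoint.insert hdisj fun p hp _ => ?_
    exact hdisjtail p hp
  · rw [Finset.sup_insert, hsup]
    ext a
    simp only [id_eq, Finset.sup_eq_union, Finset.mem_union, Finset.mem_Icc]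
    omega
  · rw [Finset.card_insert_of_notMem hnotin, hcard]; omega

end part


lemma canonPart_mem {m n : ℕ} {p : Finset ℕ} (hp : p ∈ canonPart m n) :
    (∃ t, p = {t}) ∨ p = Finset.Icc m n := by
  rw [canonPart, Finset.mem_union, Finset.mem_image] at hp
  rcases hp with ⟨t, _, rfl⟩ | hp
  · exact Or.inl ⟨t, rfl⟩
  · exact Or.inr (Finset.mem_singleton.mp hp)

lemma Icc_min' {a b : ℕ} (h : (Finset.Icc a b).Nonempty) : (Finset.Icc a b).min' h = a :=
  le_antisymm (Finset.min'_le _ _ (Finset.mem_Icc.mpr ⟨le_refl a, Finset.nonempty_Icc.mp h⟩))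
    (Finset.le_min' _ _ _ fun t ht => (Finset.mem_Icc.mp ht).1)

lemma Icc_max' {a b : ℕ} (h : (Finset.Icc a b).Nonempty) : (Finset.Icc a b).max' h = b :=
  le_antisymm (Finset.max'_le _ _ _ fun t ht => (Finset.mem_Icc.mp ht).2)
    (Finset.le_max' _ _ (Finset.mem_Icc.mpr ⟨Finset.nonempty_Icc.mp h, le_refl b⟩))


/-- Bellman recursion for k-center on a 2d Pareto front:
`C_{i,k} = min_{j ∈ [1,i]} max(C_{j−1,k−1}, f({x_j,…,x_i}))` (with `C_{0,k} = 0`,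
i.e. the value on the empty prefix). -/
theorem kcenter_bellman_recursion (N : ℕ) (x : ℕ → Pt)
    (mono : ∀ i j : ℕ, i < j → j ≤ N → prec (x i) (x j))
    (cost : Finset ℕ → ℝ) (hcost : cost = cCost x ∨ cost = dCost x)
    (i k : ℕ) (hi : 1 ≤ i) (hiN : i ≤ N) (hk : 2 ≤ k) (hki : k ≤ i) :
    CVal cost (Finset.Icc 1 i) k
      = (Finset.Icc 1 i).inf' (Finset.nonempty_Icc.mpr hi)
          (fun j => max (CVal cost (Finset.Icc 1 (j - 1)) (k - 1))
            (cost (Finset.Icc j i))) := by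
  -- generic facts about the cost function
  have cost_nonneg : ∀ P, 0 ≤ cost P := by
    rcases hcost with rfl | rfl
    exacts [fun P => cCost_nonneg P, fun P => dCost_nonneg P]
  have cost_single : ∀ t, cost ({t} : Finset ℕ) = 0 := by
    rcases hcost with rfl | rfl
    exacts [fun t => cCost_singleton t, fun t => dCost_singleton t]
  have cost_L1 : ∀ (P : Finset ℕ) (hP : P.Nonempty), (∀ t ∈ P, t ≤ N) →
      ∀ {a b : ℕ}, a ≤ b → P.min' hP ≤ a → b ≤ P.max' hP →
      cost (Finset.Icc a b) ≤ cost P := by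
    rcases hcost with rfl | rfl
    · exact fun P hP hN _ _ hab h1 h2 => cCost_Icc_le mono P hP hN hab h1 h2
    · exact fun P hP hN _ _ hab h1 h2 => dCost_Icc_le mono P hP hN hab h1 h2
  have cost_L2 : ∀ (P : Finset ℕ), (∀ t ∈ P, t ≤ N) → ∀ (j : ℕ),
      (P.filter (· < j)).Nonempty → cost (P.filter (· < j)) ≤ cost P := by
    rcases hcost with rfl | rfl
    · exact fun P _ j hQ => cCost_mono (Finset.filter_subset _ _) hQ
    · exact fun P hN j hQ => dCost_filter_le mono P hN j hQ
  apply le_antisymm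
  · -- easy direction: CVal ≤ each candidate
    refine Finset.le_inf' _ _ fun j hj => ?_
    rw [Finset.mem_Icc] at hj
    rcases le_or_gt k j with hkj | hjk
    · -- j ≥ k : combine an optimal prefix partition with the tail interval
      obtain ⟨π', hπ', hobj⟩ := CVal_attained (cost := cost)
        ⟨canonPart (k-1) (j-1), canonPart_isPartition (by omega) (by omega)⟩
      obtain ⟨hpart, -⟩ := insert_tail_partition hj.1 hj.2 hπ' (by omega)
      refine le_trans (CVal_le hpart) ?_
      have hπ'ne : π'.Nonempty := by
        rw [← Finset.card_pos, hπ'.2.2.2]; omega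
      have hins : kObj cost (insert (Finset.Icc j i) π') =
          cost (Finset.Icc j i) ⊔ π'.sup' hπ'ne cost := by
        rw [kObj, dif_pos (Finset.insert_nonempty _ _), Finset.sup'_insert hπ'ne]
      have e : kObj cost π' = π'.sup' hπ'ne cost := dif_pos hπ'ne
      rw [hins, ← e, hobj]
      exact sup_le (le_max_right _ _) (le_max_left _ _)
    · -- j < k : the prefix value is 0 and the canonical partition works
      have h0 : CVal cost (Finset.Icc 1 (j-1)) (k-1) = 0 :=
        CVal_zero (by rw [Nat.card_Icc]; omega)
      rw [h0, max_eq_right (cost_nonneg _)]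
      refine le_trans (CVal_le (canonPart_isPartition (m := k) (n := i) (by omega) hki)) ?_
      have hIccMem : Finset.Icc k i ∈ canonPart k i := by
        rw [canonPart, Finset.mem_union]
        exact Or.inr (Finset.mem_singleton_self _)
      have hcne : (canonPart k i).Nonempty := ⟨_, hIccMem⟩
      refine kObj_le hcne fun p hp => ?_
      rcases canonPart_mem hp with ⟨t, rfl⟩ | rfl
      · rw [cost_single]; exact cost_nonneg _
      · -- cost (Icc k i) ≤ cost (Icc j i)
        have hPne : (Finset.Icc j i).Nonempty := Finset.nonempty_Icc.mpr hj.2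
        refine cost_L1 (Finset.Icc j i) hPne
          (fun t ht => le_trans (Finset.mem_Icc.mp ht).2 hiN) hki ?_ ?_
        · rw [Icc_min']; omega
        · rw [Icc_max']
  · -- hard direction: an optimal partition yields a good split index j
    obtain ⟨π, hπ, hobj⟩ := CVal_attained (cost := cost)
      ⟨canonPart k i, canonPart_isPartition (by omega) hki⟩
    obtain ⟨hne, hdisj, hsup, hcard⟩ := hπ
    have hπne : π.Nonempty := by rw [← Finset.card_pos, hcard]; omega
    have hsub : ∀ p ∈ π, p ⊆ Finset.Icc 1 i := by
      intro p hp; rw [← hsup]; exact Finset.le_sup (f := id) hp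
    -- choose the part with the largest minimum
    obtain ⟨Qa, -, hQmax⟩ := π.attach.exists_max_image
      (fun p => p.1.min' (hne p.1 p.2)) (Finset.attach_nonempty_iff.mpr hπne)
    set Q : Finset ℕ := Qa.1 with hQdef
    have hQ : Q ∈ π := Qa.2
    have hQne : Q.Nonempty := hne Q hQ
    set j : ℕ := Q.min' hQne with hjdef
    have hQmax' : ∀ p (hp : p ∈ π), p.min' (hne p hp) ≤ j := by
      intro p hp
      have := hQmax ⟨p, hp⟩ (Finset.mem_attach _ _)
      exact this
    have hjQ : j ∈ Q := Q.min'_mem hQne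
    have hjIcc : j ∈ Finset.Icc 1 i := hsub Q hQ hjQ
    have hj1 : 1 ≤ j := (Finset.mem_Icc.mp hjIcc).1
    have hji : j ≤ i := (Finset.mem_Icc.mp hjIcc).2
    -- the part containing i dominates the tail interval
    have hiSup : i ∈ π.sup id := by
      rw [hsup]; exact Finset.mem_Icc.mpr ⟨hi, le_refl i⟩
    obtain ⟨R, hR, hiR⟩ := Finset.mem_sup.mp hiSup
    have hRne : R.Nonempty := hne R hR
    have hTail : cost (Finset.Icc j i) ≤ kObj cost π := by
      refine le_trans ?_ (le_kObj hR)
      refine cost_L1 R hRne (fun t ht => le_trans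
        ((Finset.mem_Icc.mp (hsub R hR ht)).2) hiN) hji (hQmax' R hR) (Finset.le_max' _ _ hiR)
    -- the trimmed partition of the prefix
    set π' : Finset (Finset ℕ) := (π.erase Q).image (fun p => p.filter (· < j)) with hπ'def
    have htrimne : ∀ p ∈ π.erase Q, (p.filter (· < j)).Nonempty := by
      intro p hp
      have hpπ : p ∈ π := Finset.mem_of_mem_erase hp
      have hpQ : p ≠ Q := Finset.ne_of_mem_erase hp
      have hple : p.min' (hne p hpπ) ≤ j := hQmax' p hpπ
      have hpne : p.min' (hne p hpπ) ≠ j := by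
        intro heq
        have h1 : j ∈ p := heq ▸ p.min'_mem (hne p hpπ)
        have := hdisj (Finset.mem_coe.mpr hpπ) (Finset.mem_coe.mpr hQ) hpQ
        exact Finset.disjoint_left.mp this h1 hjQ
      exact ⟨p.min' (hne p hpπ), Finset.mem_filter.mpr
        ⟨p.min'_mem (hne p hpπ), lt_of_le_of_ne hple hpne⟩⟩
    have hinj : Set.InjOn (fun p : Finset ℕ => p.filter (· < j)) (↑(π.erase Q) : Set (Finset ℕ)) := by
      intro p hp q hq heq
      by_contra hpq
      have hpπ : p ∈ π := Finset.mem_of_mem_erase (Finset.mem_coe.mp hp)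
      have hqπ : q ∈ π := Finset.mem_of_mem_erase (Finset.mem_coe.mp hq)
      obtain ⟨t, ht⟩ := htrimne p (Finset.mem_coe.mp hp)
      have htp : t ∈ p := (Finset.mem_filter.mp ht).1
      have heq' : p.filter (· < j) = q.filter (· < j) := heq
      have htq : t ∈ q := (Finset.mem_filter.mp (heq' ▸ ht)).1
      have := hdisj (Finset.mem_coe.mpr hpπ) (Finset.mem_coe.mpr hqπ) hpq
      exact Finset.disjoint_left.mp this htp htq
    have hπ'part : IsPartitionOf π' (Finset.Icc 1 (j-1)) (k-1) := by
      refine ⟨?_, ?_, ?_, ?_⟩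
      · intro p hp
        obtain ⟨q, hq, rfl⟩ := Finset.mem_image.mp hp
        exact htrimne q hq
      · intro A hA B hB hAB
        obtain ⟨p, hp, rfl⟩ := Finset.mem_image.mp (Finset.mem_coe.mp hA)
        obtain ⟨q, hq, rfl⟩ := Finset.mem_image.mp (Finset.mem_coe.mp hB)
        have hpq : p ≠ q := fun h => hAB (by rw [h])
        have hd := hdisj (Finset.mem_coe.mpr (Finset.mem_of_mem_erase hp))
          (Finset.mem_coe.mpr (Finset.mem_of_mem_erase hq)) hpq
        exact Disjoint.mono (Finset.filter_subset _ _) (Finset.filter_subset _ _) hd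
      · apply Finset.Subset.antisymm
        · show π'.sup id ≤ Finset.Icc 1 (j-1)
          refine Finset.sup_le fun A hA => ?_
          obtain ⟨p, hp, rfl⟩ := Finset.mem_image.mp hA
          show p.filter (· < j) ⊆ Finset.Icc 1 (j-1)
          intro a ha
          rw [Finset.mem_filter] at ha
          have := Finset.mem_Icc.mp (hsub p (Finset.mem_of_mem_erase hp) ha.1)
          rw [Finset.mem_Icc]
          omega
        · intro a ha
          rw [Finset.mem_Icc] at ha
          have haIcc : a ∈ Finset.Icc 1 i := Finset.mem_Icc.mpr ⟨ha.1, by omega⟩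
          rw [← hsup] at haIcc
          obtain ⟨p, hp, hap⟩ := Finset.mem_sup.mp haIcc
          have hpQ : p ≠ Q := by
            intro h
            have : j ≤ a := Q.min'_le a (h ▸ hap)
            omega
          refine Finset.mem_sup.mpr ⟨p.filter (· < j), ?_, ?_⟩
          · exact Finset.mem_image.mpr ⟨p, Finset.mem_erase.mpr ⟨hpQ, hp⟩, rfl⟩
          · exact Finset.mem_filter.mpr ⟨hap, by omega⟩
      · rw [Finset.card_image_of_injOn hinj, Finset.card_erase_of_mem hQ, hcard]
    have hπ'ne : π'.Nonempty := by
      rw [← Finset.card_pos, hπ'part.2.2.2]; omega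
    have hPrefix : CVal cost (Finset.Icc 1 (j-1)) (k-1) ≤ kObj cost π := by
      refine le_trans (CVal_le hπ'part) ?_
      refine kObj_le hπ'ne fun A hA => ?_
      obtain ⟨p, hp, rfl⟩ := Finset.mem_image.mp hA
      have hpπ : p ∈ π := Finset.mem_of_mem_erase hp
      refine le_trans (cost_L2 p (fun t ht => le_trans
        ((Finset.mem_Icc.mp (hsub p hpπ ht)).2) hiN) j (htrimne p hp)) (le_kObj hpπ)
    refine le_trans (Finset.inf'_le _ hjIcc) ?_
    rw [← hobj]
    exact max_le hPrefix hTail
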